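/- arXiv:2105.11365 — 2 statements merged into one kernel-verified Lean document; each statement's English description precedes it below -/
import Mathlib

section
/- For all positive integers n and k with k ≤ n, Σ_{j=k}^{n} j(j-1)·s(n,j)·S(j,k) = (2·n!/(k-1)!)·Σ_{i=1}^{n-k+1} C(n-i,k-1)·( H_i·(1+ik)/(i(i+1)) - 1/i² ), where H_i = 1 + 1/2 + … + 1/i. -/
/-- Unsigned Stirling numbers of the first kind. -/
def stirling1 : ℕ → ℕ → ℕ
  | 0, 0 => 1
  | 0, _ + 1 => 0
  | _ + 1, 0 => 0
  | n + 1, k + 1 => stirling1 n k + n * stirling1 n (k + 1)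

/-- Stirling numbers of the second kind. -/
def stirling2 : ℕ → ℕ → ℕ
  | 0, 0 => 1
  | 0, _ + 1 => 0
  | _ + 1, 0 => 0
  | n + 1, k + 1 => stirling2 n k + (k + 1) * stirling2 n (k + 1)

open scoped BigOperators
/-- The `i`-th harmonic number `H_i = 1 + 1/2 + ⋯ + 1/i`. -/
def harmonicNumber (i : ℕ) : ℚ := ∑ l ∈ Finset.Icc 1 i, (1 : ℚ) / l

/-!
Write `W_w(n, k) = ∑ⱼ w(j) s(n, j) S(j, k)`. The triangle recurrences of `s` and `S` give
`W_w(n+1, k+1) = W_{w(·+1)}(n, k) + (k+1) W_{w(·+1)}(n, k+1) + n W_w(n, k+1)`,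
and shifting the weights `1`, `j`, `j(j-1)` only adds multiples of lower ones. So the three
sums (the Lah numbers and their first two moments) are computed by induction on `n`, each using
the previous one. Their closed forms are binomial convolutions `∑ᵢ C(N-i, c) g(i)`, which obey
Pascal's rule in `(c, N)`, the absorption identity `(c+1) C(m, c+1) = (m-c) C(m, c)`, and pass
to partial sums of `g` as `c` grows; with these three rules every induction step reduces to an
identity between summands.
-/

open Finset Nat

theorem stirling1_eq_stirlingFirst : stirling1 = stirlingFirst := by
  funext n k
  induction n generalizing k with
  | zero => cases k <;> rfl
  | succ n ih =>
    cases k with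
    | zero => rfl
    | succ k => rw [stirling1, stirlingFirst_succ_succ, ih, ih, add_comm]

theorem stirling2_eq_stirlingSecond : stirling2 = stirlingSecond := by
  funext n k
  induction n generalizing k with
  | zero => cases k <;> rfl
  | succ n ih =>
    cases k with
    | zero => rfl
    | succ k => rw [stirling2, stirlingSecond_succ_succ, ih, ih, add_comm]

theorem harmonicNumber_succ (i : ℕ) :
    harmonicNumber (i + 1) = harmonicNumber i + 1 / (i + 1) := by
  rw [harmonicNumber, sum_Icc_succ_top (by omega), ← harmonicNumber]
  push_cast
  rfl

section WeightedLah

variable {R : Type*} [CommSemiring R]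

def weightedLah (w : ℕ → R) (n k : ℕ) : R :=
  ∑ j ∈ range (n + 1), w j * stirlingFirst n j * stirlingSecond j k

theorem weightedLah_eq_sum_Icc (w : ℕ → R) (n k : ℕ) :
    weightedLah w n k = ∑ j ∈ Icc k n, w j * stirlingFirst n j * stirlingSecond j k := by
  refine (sum_subset (fun j hj => ?_) fun j hj hjk => ?_).symm
  · simp only [mem_Icc, mem_range] at hj ⊢
    omega
  · simp only [mem_Icc, mem_range] at hj hjk
    simp [stirlingSecond_eq_zero_of_lt (show j < k by omega)]

theorem weightedLah_succ_zero (w : ℕ → R) (n : ℕ) : weightedLah w (n + 1) 0 = 0 := by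
  refine sum_eq_zero fun j _ => ?_
  cases j <;> simp

theorem weightedLah_eq_add_mul {u v w : ℕ → R} {a : R} (h : ∀ j, u j = v j + a * w j)
    (n k : ℕ) :
    weightedLah u n k = weightedLah v n k + a * weightedLah w n k := by
  simp only [weightedLah, h, mul_sum, ← sum_add_distrib]
  exact sum_congr rfl fun j _ => by ring

theorem weightedLah_succ_succ (w : ℕ → R) (n k : ℕ) :
    weightedLah w (n + 1) (k + 1) = weightedLah (fun j => w (j + 1)) n k
      + (k + 1) * weightedLah (fun j => w (j + 1)) n (k + 1) + n * weightedLah w n (k + 1) := by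
  set f : ℕ → R := fun j => w j * stirlingFirst n j * stirlingSecond j (k + 1)
  have hshift : ∑ j ∈ range (n + 1), f (j + 1) = weightedLah w n (k + 1) := by
    have hlow := sum_range_succ' f (n + 1)
    have htop := sum_range_succ f (n + 1)
    simp only [f, stirlingFirst_eq_zero_of_lt n.lt_succ_self, stirlingSecond_zero_succ,
      cast_zero, mul_zero, zero_mul, add_zero] at hlow htop
    exact hlow.symm.trans htop
  rw [← hshift, weightedLah, sum_range_succ']
  simp only [weightedLah, f, stirlingFirst_succ_zero, cast_zero, mul_zero, zero_mul, add_zero,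
    mul_sum, ← sum_add_distrib]
  refine sum_congr rfl fun j _ => ?_
  rw [stirlingFirst_succ_succ, stirlingSecond_succ_succ]
  push_cast
  ring

end WeightedLah

section ChooseConv

variable {R : Type*} [CommSemiring R]

def chooseConv (c : ℕ) (g : ℕ → R) (N : ℕ) : R :=
  ∑ i ∈ Icc 1 N, ((N - i).choose c : R) * g i

theorem chooseConv_zero_left (g : ℕ → R) (N : ℕ) :
    chooseConv 0 g N = ∑ i ∈ Icc 1 N, g i := by
  simp [chooseConv]

theorem chooseConv_zero_succ (g : ℕ → R) (N : ℕ) :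
    chooseConv 0 g (N + 1) = chooseConv 0 g N + g (N + 1) := by
  rw [chooseConv_zero_left, chooseConv_zero_left, sum_Icc_succ_top (by omega)]

theorem chooseConv_succ_succ (c : ℕ) (g : ℕ → R) (N : ℕ) :
    chooseConv (c + 1) g (N + 1) = chooseConv c g N + chooseConv (c + 1) g N := by
  rw [chooseConv, sum_Icc_succ_top (by omega), Nat.sub_self, choose_zero_succ, cast_zero,
    zero_mul, add_zero, chooseConv, chooseConv, ← sum_add_distrib]
  refine sum_congr rfl fun i hi => ?_
  rw [show N + 1 - i = N - i + 1 by grind, choose_succ_succ]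
  push_cast
  ring

theorem chooseConv_one (c N : ℕ) :
    chooseConv c (fun _ => (1 : R)) N = N.choose (c + 1) := by
  induction N generalizing c with
  | zero => simp [chooseConv]
  | succ N ih =>
    cases c with
    | zero => simp [chooseConv_zero_succ, ih]
    | succ c => rw [chooseConv_succ_succ, ih, ih, choose_succ_succ N, cast_add]

theorem chooseConv_succ_eq_chooseConv_sum_Ico (c : ℕ) (g : ℕ → R) (N : ℕ) :
    chooseConv (c + 1) g N = chooseConv c (fun i => ∑ l ∈ Ico 1 i, g l) N := by
  induction N generalizing c with
  | zero => simp [chooseConv]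
  | succ N ih =>
    cases c with
    | zero =>
      rw [chooseConv_succ_succ, ih, chooseConv_zero_succ, chooseConv_zero_left,
        Ico_add_one_right_eq_Icc, add_comm]
    | succ c => rw [chooseConv_succ_succ, chooseConv_succ_succ, ih, ih]

theorem chooseConv_eq_sum_Icc_sub (c : ℕ) (g : ℕ → R) (N : ℕ) :
    chooseConv c g N = ∑ i ∈ Icc 1 (N - c), ((N - i).choose c : R) * g i := by
  refine (sum_subset (Icc_subset_Icc_right (N.sub_le c)) fun i hi hic => ?_).symm
  simp only [mem_Icc] at hi hic
  simp [choose_eq_zero_of_lt (show N - i < c by omega)]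

end ChooseConv

section ChooseConvRing

variable {R : Type*} [CommRing R]

theorem cast_add_one_mul_choose_succ (m c : ℕ) :
    ((c : R) + 1) * m.choose (c + 1) = ((m : R) - c) * m.choose c := by
  rcases le_or_gt c m with h | h
  · have := congr_arg ((↑) : ℕ → R) (choose_succ_right_eq m c)
    push_cast [h] at this
    linear_combination this
  · simp [choose_eq_zero_of_lt h, choose_eq_zero_of_lt (show m < c + 1 by omega)]

theorem succ_mul_chooseConv_succ (c : ℕ) (g : ℕ → R) (N : ℕ) :
    ((c : R) + 1) * chooseConv (c + 1) g N
      = ((N : R) - c) * chooseConv c g N - chooseConv c (fun i => i * g i) N := by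
  simp only [chooseConv, mul_sum, ← sum_sub_distrib]
  refine sum_congr rfl fun i hi => ?_
  have hiN : i ≤ N := (mem_Icc.mp hi).2
  rw [← mul_assoc, cast_add_one_mul_choose_succ, cast_sub hiN]
  ring

end ChooseConvRing

theorem chooseConv_zero_one_div (N : ℕ) :
    chooseConv 0 (fun i => 1 / (i : ℚ)) N = harmonicNumber N := by
  rw [chooseConv_zero_left, harmonicNumber]

theorem chooseConv_succ_one_div (c N : ℕ) :
    chooseConv (c + 1) (fun i => 1 / (i : ℚ)) N
      = chooseConv c (fun i => harmonicNumber (i - 1)) N := by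
  rw [chooseConv_succ_eq_chooseConv_sum_Ico]
  refine sum_congr rfl fun i hi => ?_
  obtain ⟨m, rfl⟩ : ∃ m, i = m + 1 := ⟨i - 1, by grind⟩
  dsimp only
  rw [Ico_add_one_right_eq_Icc, Nat.add_sub_cancel, harmonicNumber]

theorem succ_mul_chooseConv_succ_one_div (c N : ℕ) :
    ((c : ℚ) + 1) * chooseConv (c + 1) (fun i => 1 / (i : ℚ)) N
      = ((N : ℚ) - c) * chooseConv c (fun i => 1 / (i : ℚ)) N - N.choose (c + 1) := by
  have hone : chooseConv c (fun i => (i : ℚ) * (1 / i)) N = chooseConv c (fun _ => 1) N :=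
    sum_congr rfl fun i hi => by
      have : (i : ℚ) ≠ 0 := by have := (mem_Icc.mp hi).1; positivity
      simp only [mul_one_div_cancel this]
  rw [succ_mul_chooseConv_succ, hone, chooseConv_one]

def harmonicKernel (k i : ℕ) : ℚ :=
  harmonicNumber i * (1 + (i : ℚ) * (k : ℚ)) / ((i : ℚ) * ((i : ℚ) + 1)) - 1 / (i : ℚ) ^ 2

theorem succ_mul_harmonicKernel_one (m : ℕ) :
    ((m : ℚ) + 1) * harmonicKernel 1 (m + 1) = harmonicNumber m := by
  simp only [harmonicKernel, harmonicNumber_succ]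
  push_cast
  field_simp
  ring

theorem add_mul_harmonicKernel (c m : ℕ) :
    ((c : ℚ) + 1 + (m + 1)) * harmonicKernel (c + 2) (m + 1)
      = (c + 1) * harmonicKernel (c + 1) (m + 1) + (c + 1) / (m + 1)
        + (c + 2) * harmonicNumber m := by
  simp only [harmonicKernel, harmonicNumber_succ]
  push_cast
  field_simp
  ring

theorem chooseConv_harmonicKernel (c N : ℕ) :
    ((c : ℚ) + 1) * chooseConv c (harmonicKernel (c + 2)) N
      + chooseConv c (fun i => i * harmonicKernel (c + 2) i) N
      = (c + 1) * chooseConv c (harmonicKernel (c + 1)) N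
        + (c + 1) * chooseConv c (fun i => 1 / (i : ℚ)) N
        + (c + 2) * chooseConv c (fun i => harmonicNumber (i - 1)) N := by
  simp only [chooseConv, mul_sum, ← sum_add_distrib]
  refine sum_congr rfl fun i hi => ?_
  obtain ⟨m, rfl⟩ : ∃ m, i = m + 1 := ⟨i - 1, by grind⟩
  push_cast [Nat.add_sub_cancel]
  linear_combination ((N - (m + 1)).choose c : ℚ) * add_mul_harmonicKernel c m

theorem weightedLah_one_succ_succ (n c : ℕ) :
    weightedLah (fun _ => (1 : ℚ)) (n + 1) (c + 1)
      = ((n + 1)! : ℚ) / (c + 1)! * n.choose c := by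
  induction n generalizing c with
  | zero =>
    cases c <;> simp [weightedLah, sum_range_succ, stirlingFirst_self, stirlingSecond_self,
      stirlingSecond_eq_zero_of_lt]
  | succ n ih =>
    rw [weightedLah_succ_succ]
    cases c with
    | zero =>
      rw [weightedLah_succ_zero, ih 0]
      push_cast [factorial_succ, choose_zero_right]
      ring
    | succ c =>
      rw [ih, ih, choose_succ_succ n c]
      have habs := cast_add_one_mul_choose_succ (R := ℚ) n c
      push_cast [factorial_succ] at habs ⊢
      field_simp
      linear_combination habs

theorem weightedLah_cast_succ_succ (n c : ℕ) :
    weightedLah (fun j => (j : ℚ)) (n + 1) (c + 1)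
      = ((n + 1)! : ℚ) / c ! * chooseConv c (fun i => 1 / (i : ℚ)) (n + 1) := by
  induction n generalizing c with
  | zero =>
    cases c <;> simp [weightedLah, chooseConv, sum_range_succ, stirlingFirst_self,
      stirlingSecond_self, stirlingSecond_eq_zero_of_lt]
  | succ n ih =>
    have hshift := weightedLah_eq_add_mul (u := fun j => (j : ℚ) + 1)
      (v := fun j => (j : ℚ)) (w := fun _ => 1) (a := 1) (fun j => by ring)
    rw [weightedLah_succ_succ]
    push_cast
    rw [hshift, hshift]
    cases c with
    | zero =>
      rw [weightedLah_succ_zero, weightedLah_succ_zero, ih, weightedLah_one_succ_succ,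
        chooseConv_zero_succ _ (n + 1)]
      push_cast [factorial_succ, choose_zero_right]
      field_simp
      ring
    | succ c =>
      rw [ih, ih, weightedLah_one_succ_succ, weightedLah_one_succ_succ,
        chooseConv_succ_succ c _ (n + 1)]
      have hA := succ_mul_chooseConv_succ_one_div c (n + 1)
      rw [choose_succ_succ n c] at hA
      push_cast [factorial_succ] at hA ⊢
      field_simp
      linear_combination hA

theorem weightedLah_mul_sub_one_succ_succ (n c : ℕ) :
    weightedLah (fun j => (j : ℚ) * (j - 1)) (n + 1) (c + 1)
      = 2 * ((n + 1)! : ℚ) / c ! * chooseConv c (harmonicKernel (c + 1)) (n + 1) := by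
  induction n generalizing c with
  | zero =>
    cases c <;> simp [weightedLah, chooseConv, sum_range_succ, stirlingFirst_self,
      stirlingSecond_self, stirlingSecond_eq_zero_of_lt, harmonicKernel, harmonicNumber]
  | succ n ih =>
    have hshift := weightedLah_eq_add_mul (u := fun j => ((j : ℚ) + 1) * ((j : ℚ) + 1 - 1))
      (v := fun j => (j : ℚ) * (j - 1)) (w := fun j => (j : ℚ)) (a := 2) (fun j => by ring)
    rw [weightedLah_succ_succ]
    push_cast
    rw [hshift, hshift]
    cases c with
    | zero =>
      rw [weightedLah_succ_zero, weightedLah_succ_zero, ih, weightedLah_cast_succ_succ,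
        chooseConv_zero_succ _ (n + 1), chooseConv_zero_one_div]
      have hK := succ_mul_harmonicKernel_one (n + 1)
      push_cast [factorial_succ] at hK ⊢
      field_simp
      linear_combination -2 * ((n : ℚ) + 1) * n ! * hK
    | succ c =>
      rw [ih, ih, weightedLah_cast_succ_succ, weightedLah_cast_succ_succ,
        chooseConv_succ_succ c _ (n + 1)]
      have hA := succ_mul_chooseConv_succ c (harmonicKernel (c + 2)) (n + 1)
      have hterm := chooseConv_harmonicKernel c (n + 1)
      rw [chooseConv_succ_one_div]
      push_cast [factorial_succ] at hA hterm ⊢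
      field_simp
      linear_combination hA - hterm

theorem stmt_7 (n k : ℕ) (hk : 1 ≤ k) (hkn : k ≤ n) :
    (∑ j ∈ Finset.Icc k n, (j : ℚ) * ((j : ℚ) - 1) * (stirling1 n j : ℚ) * (stirling2 j k : ℚ)) =
      2 * (n.factorial : ℚ) / ((k - 1).factorial : ℚ) *
        ∑ i ∈ Finset.Icc 1 (n - k + 1), ((n - i).choose (k - 1) : ℚ) *
          (harmonicNumber i * (1 + (i : ℚ) * (k : ℚ)) / ((i : ℚ) * ((i : ℚ) + 1))
            - 1 / (i : ℚ) ^ 2) := by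
  obtain ⟨c, rfl⟩ : ∃ c, k = c + 1 := ⟨k - 1, by omega⟩
  obtain ⟨m, rfl⟩ : ∃ m, n = m + 1 := ⟨n - 1, by omega⟩
  rw [stirling1_eq_stirlingFirst, stirling2_eq_stirlingSecond,
    ← weightedLah_eq_sum_Icc (fun j => (j : ℚ) * (j - 1)), weightedLah_mul_sub_one_succ_succ,
    chooseConv_eq_sum_Icc_sub, Nat.add_sub_cancel, show m + 1 - (c + 1) + 1 = m + 1 - c by omega]
  rfl
end

section
/- Let k, n be positive integers with n > k, and let z be a positive integer with z ≤ (n-1)/k (i.e., zk < n). Then Σ_{j=k}^{n} s(n,j)·S(j,k)·(-z)^j = 0. -/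
open Finset Polynomial
open scoped Nat

theorem stirling1_eq_stirlingFirst_s12 : ∀ n k : ℕ, stirling1 n k = Nat.stirlingFirst n k
  | 0, 0 | 0, _ + 1 | _ + 1, 0 => rfl
  | n + 1, k + 1 => by
    rw [stirling1, Nat.stirlingFirst_succ_succ, stirling1_eq_stirlingFirst_s12 n k,
      stirling1_eq_stirlingFirst_s12 n (k + 1), add_comm]

theorem stirling2_eq_stirlingSecond_s12 : ∀ n k : ℕ, stirling2 n k = Nat.stirlingSecond n k
  | 0, 0 | 0, _ + 1 | _ + 1, 0 => rfl
  | n + 1, k + 1 => by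
    rw [stirling2, Nat.stirlingSecond_succ_succ, stirling2_eq_stirlingSecond_s12 n k,
      stirling2_eq_stirlingSecond_s12 n (k + 1), add_comm]

namespace Nat

theorem sum_stirlingFirst_mul_pow {R : Type*} [CommSemiring R] (n : ℕ) (x : R) :
    ∑ j ∈ range (n + 1), (stirlingFirst n j : R) * x ^ j = (ascPochhammer R n).eval x := by
  induction n with
  | zero => simp
  | succ n ih =>
    -- `n * stirlingFirst n 0 = 0`, so shifting the index does not change `n * ∑ ...`
    have hshift : (n : R) * ∑ j ∈ range (n + 1), (stirlingFirst n (j + 1) : R) * x ^ (j + 1)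
        = n * ∑ j ∈ range (n + 1), (stirlingFirst n j : R) * x ^ j := by
      rcases n with _ | n
      · simp
      · rw [sum_range_succ, sum_range_succ' _ (n + 1),
          stirlingFirst_eq_zero_of_lt (lt_add_one (n + 1))]
        simp
    rw [ascPochhammer_succ_eval, ← ih, sum_range_succ', stirlingFirst_succ_zero, cast_zero,
      zero_mul, add_zero]
    simp only [stirlingFirst_succ_succ, cast_add, cast_mul, add_mul, sum_add_distrib, mul_assoc,
      ← mul_sum, hshift]
    simp only [pow_succ, ← mul_assoc, ← sum_mul]
    ring

theorem mul_descFactorial (x m : ℕ) :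
    x * x.descFactorial m = x.descFactorial (m + 1) + m * x.descFactorial m := by
  rcases le_or_gt m x with h | h
  · rw [descFactorial_succ, ← add_mul, Nat.sub_add_cancel h]
  · simp [descFactorial_eq_zero_iff_lt.mpr h]

theorem pow_eq_sum_stirlingSecond_mul_descFactorial (x j : ℕ) :
    x ^ j = ∑ m ∈ range (j + 1), stirlingSecond j m * x.descFactorial m := by
  induction j with
  | zero => simp
  | succ j ih =>
    have hshift : ∑ m ∈ range (j + 1), (m + 1) * stirlingSecond j (m + 1) * x.descFactorial (m + 1)
        = ∑ m ∈ range (j + 1), m * stirlingSecond j m * x.descFactorial m := by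
      rw [sum_range_succ, sum_range_succ', stirlingSecond_eq_zero_of_lt (lt_add_one j)]
      simp
    rw [pow_succ, mul_comm, ih, mul_sum, sum_range_succ' _ (j + 1), stirlingSecond_succ_zero,
      zero_mul, add_zero]
    simp only [stirlingSecond_succ_succ, add_mul _ _ (x.descFactorial _), sum_add_distrib, hshift]
    rw [← sum_add_distrib]
    refine sum_congr rfl fun m _ => ?_
    rw [mul_left_comm, mul_descFactorial]
    ring

theorem fwdDiff_iter_descFactorial_zero (k m : ℕ) :
    (fwdDiff 1)^[k] (fun x : ℕ ↦ (x.descFactorial m : ℤ)) 0 = if k = m then (k ! : ℤ) else 0 := by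
  have h : (fun x : ℕ ↦ (x.descFactorial m : ℤ)) = (m ! : ℤ) • fun x : ℕ ↦ (x.choose m : ℤ) := by
    ext x
    simp [descFactorial_eq_factorial_mul_choose]
  rw [h, fwdDiff_iter_const_smul, Pi.smul_apply, fwdDiff_iter_choose_zero]
  split_ifs with hkm <;> simp [hkm]

theorem factorial_mul_stirlingSecond (j k : ℕ) :
    (k ! * stirlingSecond j k : ℤ)
      = ∑ i ∈ range (k + 1), (-1) ^ (k - i) * (k.choose i : ℤ) * (i : ℤ) ^ j := by
  have hpow : (fun x : ℕ ↦ (x : ℤ) ^ j)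
      = ∑ m ∈ range (j + 1), (stirlingSecond j m : ℤ) • fun x : ℕ ↦ (x.descFactorial m : ℤ) := by
    ext x
    simp only [Finset.sum_apply, Pi.smul_apply, smul_eq_mul]
    exact_mod_cast pow_eq_sum_stirlingSecond_mul_descFactorial x j
  have hdiff := fwdDiff_iter_eq_sum_shift 1 (fun x : ℕ ↦ (x : ℤ) ^ j) k 0
  simp only [zero_add, smul_eq_mul, mul_one] at hdiff
  rw [← hdiff, hpow, fwdDiff_iter_finsetSum]
  simp only [fwdDiff_iter_const_smul, Finset.sum_apply, Pi.smul_apply,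
    fwdDiff_iter_descFactorial_zero, smul_eq_mul, mul_ite, mul_zero]
  rw [sum_ite_eq]
  split_ifs with hk
  · ring
  · rw [stirlingSecond_eq_zero_of_lt (not_lt.mp (mt mem_range.mpr hk)), cast_zero, mul_zero]

theorem factorial_mul_sum_stirlingFirst_mul_stirlingSecond_mul_pow (n k : ℕ) (x : ℤ) :
    k ! * ∑ j ∈ range (n + 1), (stirlingFirst n j * stirlingSecond j k : ℤ) * x ^ j
      = ∑ i ∈ range (k + 1), (-1) ^ (k - i) * (k.choose i : ℤ) * (ascPochhammer ℤ n).eval (i * x) :=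
  calc k ! * ∑ j ∈ range (n + 1), (stirlingFirst n j * stirlingSecond j k : ℤ) * x ^ j
      = ∑ j ∈ range (n + 1), (stirlingFirst n j : ℤ) * x ^ j * (k ! * stirlingSecond j k) := by
        rw [mul_sum]
        exact sum_congr rfl fun j _ => by ring
    _ = ∑ i ∈ range (k + 1), ∑ j ∈ range (n + 1),
          (stirlingFirst n j : ℤ) * x ^ j * ((-1) ^ (k - i) * k.choose i * (i : ℤ) ^ j) := by
        simp_rw [factorial_mul_stirlingSecond, mul_sum]
        exact sum_comm
    _ = _ := by
        simp_rw [← sum_stirlingFirst_mul_pow, mul_sum, mul_pow]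
        exact sum_congr rfl fun i _ => sum_congr rfl fun j _ => by ring

end Nat

open scoped BigOperators

theorem stmt_12_general (n k z : ℕ) (hzk : z * k < n) :
    (∑ j ∈ Finset.Icc k n,
        (stirling1 n j : ℤ) * (stirling2 j k : ℤ) * (-(z : ℤ)) ^ j) = 0 := by
  have hrange : ∑ j ∈ Icc k n, (stirling1 n j : ℤ) * (stirling2 j k : ℤ) * (-(z : ℤ)) ^ j
      = ∑ j ∈ range (n + 1),
          (Nat.stirlingFirst n j * Nat.stirlingSecond j k : ℤ) * (-(z : ℤ)) ^ j := by
    simp only [stirling1_eq_stirlingFirst_s12, stirling2_eq_stirlingSecond_s12]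
    refine sum_subset (fun j hj => by grind) fun j _ hj => ?_
    rw [Nat.stirlingSecond_eq_zero_of_lt (by grind), Nat.cast_zero, mul_zero, zero_mul]
  have hroot : ∀ i ∈ range (k + 1), (ascPochhammer ℤ n).eval (i * -(z : ℤ)) = 0 := fun i hi => by
    rw [mul_neg, ← Nat.cast_mul]
    exact ascPochhammer_eval_neg_coe_nat_of_lt <|
      (Nat.mul_le_mul_right z (mem_range_succ_iff.mp hi)).trans_lt (mul_comm k z ▸ hzk)
  have hfactorial : (k ! : ℤ) * ∑ j ∈ range (n + 1),
      (Nat.stirlingFirst n j * Nat.stirlingSecond j k : ℤ) * (-(z : ℤ)) ^ j = 0 := by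
    rw [Nat.factorial_mul_sum_stirlingFirst_mul_stirlingSecond_mul_pow]
    exact sum_eq_zero fun i hi => by rw [hroot i hi, mul_zero]
  rw [hrange]
  exact (mul_eq_zero.mp hfactorial).resolve_left (mod_cast k.factorial_ne_zero)

theorem stmt_12 (n k z : ℕ) (hk : 1 ≤ k) (hkn : k < n) (hz : 1 ≤ z) (hzk : z * k < n) :
    (∑ j ∈ Finset.Icc k n,
        (stirling1 n j : ℤ) * (stirling2 j k : ℤ) * (-(z : ℤ)) ^ j) = 0 :=
  stmt_12_general n k z hzk
end
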